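/- Let T be an index set and for each t ∈ T let p_t = e^{−(v_t + w_t)} be a probability density on ℝ^d such that: (i) c I_d ≤ ∇²v_t ≤ C I_d for constants C > c > 0 independent of t; (ii) sup_{t∈T} |∇v_t(0)| < ∞; (iii) sup_{t∈T} ‖∇w_t‖_∞ < ∞. Then there exist constants c̲, c̄, C̲, C̄ > 0 such that for all t ∈ T and x ∈ ℝ^d: C̲ e^{−c̲|x|²} ≤ p_t(x) ≤ C̄ e^{−c̄|x|²}. -/

import Mathlib

open MeasureTheory Real Filter Set
open scoped RealInnerProductSpace Topology ENNReal NNReal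

noncomputable section

/-- Euclidean space `ℝ^d`. -/
abbrev Euc (d : ℕ) := EuclideanSpace ℝ (Fin d)
/-- `p : ℝ^d → ℝ` is a probability density. -/
def IsDensity {d : ℕ} (p : Euc d → ℝ) : Prop :=
  (∀ x, 0 ≤ p x) ∧ Integrable p ∧ (∫ x, p x) = 1

/-- The density has a finite second moment. -/
def HasSecondMoment {d : ℕ} (p : Euc d → ℝ) : Prop :=
  Integrable fun x => ‖x‖ ^ 2 * p x

/-- The square root `√p` of a density. -/
def sqrtFn {d : ℕ} (p : Euc d → ℝ) : Euc d → ℝ := fun x => Real.sqrt (p x)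

/-- Membership in `P_H`: a probability density with finite second moment whose
square root belongs to `H¹` (differentiable with square-integrable gradient). -/
def MemPH {d : ℕ} (p : Euc d → ℝ) : Prop :=
  IsDensity p ∧ HasSecondMoment p ∧ Differentiable ℝ (sqrtFn p) ∧
    Integrable fun x => ‖gradient (sqrtFn p) x‖ ^ 2

/-- Fisher information `I(p) = ∫ |∇√p|²`. -/
def FisherInfo {d : ℕ} (p : Euc d → ℝ) : ℝ :=
  ∫ x, ‖gradient (sqrtFn p) x‖ ^ 2

/-- Entropy `H(p) = ∫ p log p`. -/
def Entropy {d : ℕ} (p : Euc d → ℝ) : ℝ := ∫ x, p x * Real.log (p x)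

/-- The measure with density `p` w.r.t. Lebesgue measure. -/
def toMeas {d : ℕ} (p : Euc d → ℝ) : Measure (Euc d) :=
  volume.withDensity fun x => ENNReal.ofReal (p x)

/-- `P₂(ℝ^d)`: probability measures with finite second moment. -/
def P2 (d : ℕ) : Set (Measure (Euc d)) :=
  {μ | IsProbabilityMeasure μ ∧ Integrable (fun x => ‖x‖ ^ 2) μ}

lemma gauss_integrable {d : ℕ} {b : ℝ} (hb : 0 < b) :
    Integrable (fun x : Euc d => Real.exp (-b * ‖x‖ ^ 2)) := by
  have h := GaussianFourier.integrable_cexp_neg_mul_sq_norm_add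
    (V := Euc d) (b := (b : ℂ)) (by simpa using hb) 0 0
  refine h.norm.congr (Filter.Eventually.of_forall fun x => ?_)
  simp only [Complex.norm_exp]
  norm_num [Complex.add_re, Complex.mul_re]
  left
  rw [← Complex.ofReal_pow, Complex.ofReal_re]

lemma gauss_pos {d : ℕ} {b : ℝ} (hb : 0 < b) :
    0 < ∫ x : Euc d, Real.exp (-b * ‖x‖ ^ 2) := by
  rw [GaussianFourier.integral_rexp_neg_mul_sq_norm hb]
  exact Real.rpow_pos_of_pos (div_pos Real.pi_pos hb) _

lemma fderiv_apply_eq_inner_gradient {d : ℕ} {f : Euc d → ℝ} {y : Euc d}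
    (hf : DifferentiableAt ℝ f y) (u : Euc d) :
    fderiv ℝ f y u = ⟪gradient f y, u⟫ := by
  rw [(hasGradientAt_iff_hasFDerivAt.mp hf.hasGradientAt).fderiv]
  exact InnerProductSpace.toDual_apply_apply

lemma ftc_bound {d : ℕ} (f : Euc d → ℝ) (hf : ContDiff ℝ 2 f) (x : Euc d) (a b : ℝ)
    (hub : ∀ s ∈ Set.Icc (0:ℝ) 1, fderiv ℝ f (s • x) x ≤ a * s + b) :
    f x - f 0 ≤ a / 2 + b := by
  have hdf : Differentiable ℝ f := hf.differentiable two_ne_zero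
  have hderiv : ∀ s : ℝ, HasDerivAt (fun s : ℝ => f (s • x)) (fderiv ℝ f (s • x) x) s := by
    intro s
    have h1 : HasDerivAt (fun s : ℝ => s • x) x s := by
      simpa using (hasDerivAt_id s).smul_const x
    exact (hdf (s • x)).hasFDerivAt.comp_hasDerivAt s h1
  have hcont : Continuous fun s : ℝ => fderiv ℝ f (s • x) x := by
    have h2 : Continuous fun y => fderiv ℝ f y := hf.continuous_fderiv two_ne_zero
    exact (h2.comp (continuous_id.smul continuous_const)).clm_apply continuous_const
  have hint : IntervalIntegrable (fun s => fderiv ℝ f (s • x) x) volume 0 1 :=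
    hcont.intervalIntegrable 0 1
  have hftc : ∫ s in (0:ℝ)..1, fderiv ℝ f (s • x) x = f x - f 0 := by
    have := intervalIntegral.integral_eq_sub_of_hasDerivAt
      (f := fun s : ℝ => f (s • x)) (fun s _ => hderiv s) hint
    simpa using this
  have hmono : ∫ s in (0:ℝ)..1, fderiv ℝ f (s • x) x ≤ ∫ s in (0:ℝ)..1, (a * s + b) :=
    intervalIntegral.integral_mono_on zero_le_one hint
      (((continuous_const.mul continuous_id).add continuous_const).intervalIntegrable 0 1)
      hub
  have hval : ∫ s in (0:ℝ)..1, (a * s + b) = a / 2 + b := by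
    have i1 : IntervalIntegrable (fun s : ℝ => a * s) volume 0 1 :=
      (continuous_const.mul continuous_id').intervalIntegrable 0 1
    rw [intervalIntegral.integral_add i1 intervalIntegrable_const,
      intervalIntegral.integral_const_mul, integral_id]
    simp
    ring
  rw [hftc, hval] at hmono
  exact hmono

/-- Gaussian bounds: if a family of probability densities writes as
`p_t = e^{−(v_t + w_t)}` with `c I ≤ ∇²v_t ≤ C I` uniformly, `∇v_t(0)` uniformly
bounded and `∇w_t` uniformly bounded, then the densities admit uniform Gaussian
upper and lower bounds. -/
theorem gaussian_bounds {d : ℕ} (T : Type*) (v w p : T → Euc d → ℝ)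
    (hp : ∀ t x, p t x = Real.exp (-(v t x + w t x)))
    (hdens : ∀ t, IsDensity (p t))
    (hvC2 : ∀ t, ContDiff ℝ 2 (v t)) (hwC2 : ∀ t, ContDiff ℝ 2 (w t))
    (c C : ℝ) (hc : 0 < c) (hcC : c < C)
    (hHess : ∀ t, ∀ x y : Euc d,
      c * ‖x - y‖ ^ 2 ≤ ⟪gradient (v t) x - gradient (v t) y, x - y⟫ ∧
      ⟪gradient (v t) x - gradient (v t) y, x - y⟫ ≤ C * ‖x - y‖ ^ 2)
    (Mv : ℝ) (hMv : ∀ t, ‖gradient (v t) 0‖ ≤ Mv)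
    (Mw : ℝ) (hMw : ∀ t x, ‖gradient (w t) x‖ ≤ Mw) :
    ∃ cl cu Cl Cu : ℝ, 0 < cl ∧ 0 < cu ∧ 0 < Cl ∧ 0 < Cu ∧
      ∀ t x, Cl * Real.exp (-cl * ‖x‖ ^ 2) ≤ p t x ∧
        p t x ≤ Cu * Real.exp (-cu * ‖x‖ ^ 2) := by
  have hC : 0 < C := lt_trans hc hcC
  have hc4 : 0 < c/4 := by linarith
  have hC2 : 0 < (C+1)/2 := by linarith
  set G1 := ∫ x : Euc d, Real.exp (-(c/4) * ‖x‖^2) with hG1def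
  set G2 := ∫ x : Euc d, Real.exp (-((C+1)/2) * ‖x‖^2) with hG2def
  have hG1pos : 0 < G1 := gauss_pos hc4
  have hG2pos : 0 < G2 := gauss_pos hC2
  have key : ∀ t x, c/2*‖x‖^2 - (Mv+Mw)*‖x‖ ≤ (v t x + w t x) - (v t 0 + w t 0) ∧
      (v t x + w t x) - (v t 0 + w t 0) ≤ C/2*‖x‖^2 + (Mv+Mw)*‖x‖ := by
    intro t x
    have hvd : Differentiable ℝ (v t) := (hvC2 t).differentiable two_ne_zero
    have hwd : Differentiable ℝ (w t) := (hwC2 t).differentiable two_ne_zero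
    have hv_inner : ∀ s ∈ Set.Icc (0:ℝ) 1,
        (c*‖x‖^2) * s - Mv*‖x‖ ≤ ⟪gradient (v t) (s • x), x⟫ ∧
        ⟪gradient (v t) (s • x), x⟫ ≤ (C*‖x‖^2) * s + Mv*‖x‖ := by
      intro s hs
      have hcs : |⟪gradient (v t) 0, x⟫| ≤ Mv * ‖x‖ :=
        le_trans (abs_real_inner_le_norm _ _)
          (mul_le_mul_of_nonneg_right (hMv t) (norm_nonneg x))
      obtain ⟨hcs1, hcs2⟩ := abs_le.mp hcs
      rcases eq_or_lt_of_le hs.1 with h | h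
      · constructor <;> (rw [← h]; simp only [zero_smul]; nlinarith [hcs1, hcs2])
      · obtain ⟨hl, hr⟩ := hHess t (s • x) 0
        rw [sub_zero] at hl hr
        have hnorm : ‖s • x‖^2 = s^2 * ‖x‖^2 := by
          rw [norm_smul, Real.norm_eq_abs, mul_pow, sq_abs]
        have hsm : ⟪gradient (v t) (s • x) - gradient (v t) 0, s • x⟫
            = s * (⟪gradient (v t) (s • x), x⟫ - ⟪gradient (v t) 0, x⟫) := by
          rw [real_inner_smul_right, inner_sub_left]
        rw [hnorm, hsm] at hl hr
        constructor
        · have h1 : c * s * ‖x‖^2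
              ≤ ⟪gradient (v t) (s • x), x⟫ - ⟪gradient (v t) 0, x⟫ :=
            le_of_mul_le_mul_left (by linarith) h
          linarith
        · have h1 : ⟪gradient (v t) (s • x), x⟫ - ⟪gradient (v t) 0, x⟫
              ≤ C * s * ‖x‖^2 :=
            le_of_mul_le_mul_left (by linarith) h
          linarith
    have hw_inner : ∀ s : ℝ, |⟪gradient (w t) (s • x), x⟫| ≤ Mw * ‖x‖ := fun s =>
      le_trans (abs_real_inner_le_norm _ _)
        (mul_le_mul_of_nonneg_right (hMw t _) (norm_nonneg x))
    have hVub : v t x - v t 0 ≤ (C*‖x‖^2)/2 + Mv*‖x‖ :=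
      ftc_bound (v t) (hvC2 t) x (C*‖x‖^2) (Mv*‖x‖) (fun s hs => by
        rw [fderiv_apply_eq_inner_gradient (hvd _) x]
        linarith [(hv_inner s hs).2])
    have hVlb : v t 0 - v t x ≤ (-(c*‖x‖^2))/2 + Mv*‖x‖ := by
      have h0 := ftc_bound (fun y => -(v t y)) (hvC2 t).neg x (-(c*‖x‖^2)) (Mv*‖x‖)
        (fun s hs => by
          rw [fderiv_fun_neg]
          simp only [ContinuousLinearMap.neg_apply]
          rw [fderiv_apply_eq_inner_gradient (hvd _) x]
          linarith [(hv_inner s hs).1])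
      have h0' : -(v t x) - -(v t 0) ≤ (-(c*‖x‖^2))/2 + Mv*‖x‖ := h0
      linarith
    have hWub : w t x - w t 0 ≤ 0/2 + Mw*‖x‖ :=
      ftc_bound (w t) (hwC2 t) x 0 (Mw*‖x‖) (fun s hs => by
        rw [fderiv_apply_eq_inner_gradient (hwd _) x]
        linarith [(abs_le.mp (hw_inner s)).2])
    have hWlb : w t 0 - w t x ≤ 0/2 + Mw*‖x‖ := by
      have h0 := ftc_bound (fun y => -(w t y)) (hwC2 t).neg x 0 (Mw*‖x‖)
        (fun s hs => by
          rw [fderiv_fun_neg]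
          simp only [ContinuousLinearMap.neg_apply]
          rw [fderiv_apply_eq_inner_gradient (hwd _) x]
          linarith [(abs_le.mp (hw_inner s)).1])
      have h0' : -(w t x) - -(w t 0) ≤ 0/2 + Mw*‖x‖ := h0
      linarith
    constructor
    · linarith
    · linarith
  have hup : ∀ t x, p t x ≤ p t 0 * (Real.exp ((Mv+Mw)^2/c) * Real.exp (-(c/4) * ‖x‖^2)) := by
    intro t x
    have hk := (key t x).1
    have h6 : 0 ≤ (c*‖x‖ - 2*(Mv+Mw))^2 / (4*c) := div_nonneg (sq_nonneg _) (by linarith)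
    have h7 : (c*‖x‖ - 2*(Mv+Mw))^2 / (4*c) = c/4*‖x‖^2 - (Mv+Mw)*‖x‖ + (Mv+Mw)^2/c := by
      field_simp
      ring
    rw [h7] at h6
    have harg : -(v t x + w t x) ≤ -(v t 0 + w t 0) + ((Mv+Mw)^2/c + -(c/4) * ‖x‖^2) := by
      nlinarith [hk, h6]
    calc p t x = Real.exp (-(v t x + w t x)) := hp t x
      _ ≤ Real.exp (-(v t 0 + w t 0) + ((Mv+Mw)^2/c + -(c/4) * ‖x‖^2)) := Real.exp_le_exp.mpr harg
      _ = p t 0 * (Real.exp ((Mv+Mw)^2/c) * Real.exp (-(c/4) * ‖x‖^2)) := by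
          rw [hp t 0, Real.exp_add, Real.exp_add]
  have hlo : ∀ t x,
      p t 0 * (Real.exp (-((Mv+Mw)^2/2)) * Real.exp (-((C+1)/2) * ‖x‖^2)) ≤ p t x := by
    intro t x
    have hk := (key t x).2
    have h5 : (Mv+Mw)*‖x‖ ≤ ‖x‖^2/2 + (Mv+Mw)^2/2 := by nlinarith [sq_nonneg (‖x‖ - (Mv+Mw))]
    have harg : -(v t 0 + w t 0) + (-((Mv+Mw)^2/2) + -((C+1)/2) * ‖x‖^2) ≤ -(v t x + w t x) := by
      nlinarith [hk, h5]
    calc p t 0 * (Real.exp (-((Mv+Mw)^2/2)) * Real.exp (-((C+1)/2) * ‖x‖^2))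
        = Real.exp (-(v t 0 + w t 0) + (-((Mv+Mw)^2/2) + -((C+1)/2) * ‖x‖^2)) := by
          rw [hp t 0, Real.exp_add, Real.exp_add]
      _ ≤ Real.exp (-(v t x + w t x)) := Real.exp_le_exp.mpr harg
      _ = p t x := (hp t x).symm
  have hq_lo : ∀ t, 1/(Real.exp ((Mv+Mw)^2/c) * G1) ≤ p t 0 := by
    intro t
    have hint : Integrable (fun x : Euc d =>
        p t 0 * (Real.exp ((Mv+Mw)^2/c) * Real.exp (-(c/4) * ‖x‖^2))) :=
      ((gauss_integrable hc4).const_mul _).const_mul _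
    have h1 : (1:ℝ) ≤ ∫ x : Euc d, p t 0 * (Real.exp ((Mv+Mw)^2/c) * Real.exp (-(c/4) * ‖x‖^2)) := by
      have h2 := integral_mono (hdens t).2.1 hint (fun x => hup t x)
      rw [(hdens t).2.2] at h2
      exact h2
    rw [integral_const_mul, integral_const_mul] at h1
    rw [div_le_iff₀ (mul_pos (Real.exp_pos _) hG1pos)]
    nlinarith [h1]
  have hq_hi : ∀ t, p t 0 ≤ 1/(Real.exp (-((Mv+Mw)^2/2)) * G2) := by
    intro t
    have hint : Integrable (fun x : Euc d =>
        p t 0 * (Real.exp (-((Mv+Mw)^2/2)) * Real.exp (-((C+1)/2) * ‖x‖^2))) :=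
      ((gauss_integrable hC2).const_mul _).const_mul _
    have h1 : ∫ x : Euc d, p t 0 * (Real.exp (-((Mv+Mw)^2/2)) * Real.exp (-((C+1)/2) * ‖x‖^2)) ≤ 1 := by
      have h2 := integral_mono hint (hdens t).2.1 (fun x => hlo t x)
      rw [(hdens t).2.2] at h2
      exact h2
    rw [integral_const_mul, integral_const_mul] at h1
    rw [le_div_iff₀ (mul_pos (Real.exp_pos _) hG2pos)]
    nlinarith [h1]
  refine ⟨(C+1)/2, c/4,
    (1/(Real.exp ((Mv+Mw)^2/c) * G1)) * Real.exp (-((Mv+Mw)^2/2)),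
    (1/(Real.exp (-((Mv+Mw)^2/2)) * G2)) * Real.exp ((Mv+Mw)^2/c),
    hC2, hc4,
    mul_pos (div_pos one_pos (mul_pos (Real.exp_pos _) hG1pos)) (Real.exp_pos _),
    mul_pos (div_pos one_pos (mul_pos (Real.exp_pos _) hG2pos)) (Real.exp_pos _),
    ?_⟩
  intro t x
  constructor
  · have h := hlo t x
    have hmul : (1/(Real.exp ((Mv+Mw)^2/c) * G1)) * Real.exp (-((Mv+Mw)^2/2))
          * Real.exp (-((C+1)/2) * ‖x‖^2)
        ≤ p t 0 * (Real.exp (-((Mv+Mw)^2/2)) * Real.exp (-((C+1)/2) * ‖x‖^2)) := by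
      rw [mul_assoc]
      exact mul_le_mul_of_nonneg_right (hq_lo t) (by positivity)
    linarith [h, hmul]
  · have h := hup t x
    have hmul : p t 0 * (Real.exp ((Mv+Mw)^2/c) * Real.exp (-(c/4) * ‖x‖^2))
        ≤ (1/(Real.exp (-((Mv+Mw)^2/2)) * G2)) * Real.exp ((Mv+Mw)^2/c)
          * Real.exp (-(c/4) * ‖x‖^2) := by
      rw [mul_assoc]
      exact mul_le_mul_of_nonneg_right (hq_hi t) (by positivity)
    linarith [h, hmul]
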